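/- arXiv:2405.17311 — 3 statements merged into one kernel-verified Lean document; each statement's English description precedes it below -/
import Mathlib

section
/- Let G and H be graphs with the same stable coloring under the 1-dimensional Weisfeiler–Leman (1-WL) color refinement (i.e., the multisets of stable colors of G and H coincide). For a color k, let G'_k and H'_k be the subgraphs of G and H induced by the vertices with stable color k. Then G'_k and H'_k also have the same stable coloring under 1-WL, i.e., they are still 1-WL indistinguishable. -/
/-!
1-WL color refinement. `WLColor L t` is the type of iteration-`t` WL colors with
initial labels in `L`; `wl G ℓ t v` is the color of vertex `v` after `t` refinement rounds.
The stable coloring is reached after at most `|V(G)| + |V(H)|` iterations, so we compare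
colorings at iteration `N = |V(G)| + |V(H)|`.
-/

def WLColor (L : Type) : ℕ → Type
  | 0 => L
  | t + 1 => WLColor L t × Multiset (WLColor L t)

def wlColorDecEq (L : Type) [DecidableEq L] : (t : ℕ) → DecidableEq (WLColor L t)
  | 0 => inferInstanceAs (DecidableEq L)
  | t + 1 =>
      letI : DecidableEq (WLColor L t) := wlColorDecEq L t
      inferInstanceAs (DecidableEq (WLColor L t × Multiset (WLColor L t)))

instance (L : Type) [DecidableEq L] (t : ℕ) : DecidableEq (WLColor L t) := wlColorDecEq L t

def wl {V L : Type} [Fintype V] [DecidableEq V] (G : SimpleGraph V) [DecidableRel G.Adj]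
    (ℓ : V → L) : (t : ℕ) → V → WLColor L t
  | 0 => ℓ
  | t + 1 => fun v => (wl G ℓ t v, (G.neighborFinset v).val.map (wl G ℓ t))

instance {α β : Type} (G : SimpleGraph β) [DecidableRel G.Adj] (f : α → β) :
    DecidableRel (G.comap f).Adj := fun a b => inferInstanceAs (Decidable (G.Adj (f a) (f b)))

-- sum graph decidability
instance sumAdjDec {α β : Type} (G : SimpleGraph α) (H : SimpleGraph β)
    [DecidableRel G.Adj] [DecidableRel H.Adj] : DecidableRel (G ⊕g H).Adj := fun a b => by
  cases a <;> cases b <;> simp [SimpleGraph.sum] <;> infer_instance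

def wlDefault : (t : ℕ) → WLColor ℕ t
  | 0 => (0 : ℕ)
  | t + 1 => (wlDefault t, 0)

instance (t : ℕ) : Inhabited (WLColor ℕ t) := ⟨wlDefault t⟩

-- projection to initial label
def wlProj0 {L : Type} : (t : ℕ) → WLColor L t → L
  | 0, c => c
  | t + 1, c => wlProj0 t c.1

lemma wlProj0_wl {V L : Type} [Fintype V] [DecidableEq V] (G : SimpleGraph V)
    [DecidableRel G.Adj] (ℓ : V → L) : ∀ (t : ℕ) (v : V), wlProj0 t (wl G ℓ t v) = ℓ v
  | 0, v => rfl
  | t + 1, v => wlProj0_wl G ℓ t v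

lemma neighborFinset_sum_inl {α β : Type} [Fintype α] [DecidableEq α] [Fintype β] [DecidableEq β]
    (G : SimpleGraph α) (H : SimpleGraph β) [DecidableRel G.Adj] [DecidableRel H.Adj] (v : α) :
    (G ⊕g H).neighborFinset (Sum.inl v)
      = (G.neighborFinset v).map ⟨Sum.inl, Sum.inl_injective⟩ := by
  ext b
  cases b <;> simp only [SimpleGraph.mem_neighborFinset, Finset.mem_map] <;> simp [SimpleGraph.sum]

lemma neighborFinset_sum_inr {α β : Type} [Fintype α] [DecidableEq α] [Fintype β] [DecidableEq β]
    (G : SimpleGraph α) (H : SimpleGraph β) [DecidableRel G.Adj] [DecidableRel H.Adj] (v : β) :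
    (G ⊕g H).neighborFinset (Sum.inr v)
      = (H.neighborFinset v).map ⟨Sum.inr, Sum.inr_injective⟩ := by
  ext b
  cases b <;> simp only [SimpleGraph.mem_neighborFinset, Finset.mem_map] <;> simp [SimpleGraph.sum]

lemma wl_sum_inl {α β : Type} [Fintype α] [DecidableEq α] [Fintype β] [DecidableEq β]
    (G : SimpleGraph α) (H : SimpleGraph β) [DecidableRel G.Adj] [DecidableRel H.Adj]
    (ℓG : α → ℕ) (ℓH : β → ℕ) :
    ∀ (t : ℕ) (v : α), wl (G ⊕g H) (Sum.elim ℓG ℓH) t (Sum.inl v) = wl G ℓG t v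
  | 0, v => rfl
  | t + 1, v => by
    simp only [wl, neighborFinset_sum_inl, Finset.map_val, Multiset.map_map]
    refine Prod.ext (wl_sum_inl G H ℓG ℓH t v) ?_
    show Multiset.map _ _ = Multiset.map _ _
    refine (congrArg (fun s : Finset (α ⊕ β) => Multiset.map (wl (G ⊕g H) (Sum.elim ℓG ℓH) t) s.val)
      (?_ : _ = (G.neighborFinset v).map ⟨Sum.inl, Sum.inl_injective⟩)).trans ?_
    · convert neighborFinset_sum_inl G H v
    simp only [Finset.map_val, Multiset.map_map]
    exact Multiset.map_congr rfl fun u _ => wl_sum_inl G H ℓG ℓH t u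

lemma wl_sum_inr {α β : Type} [Fintype α] [DecidableEq α] [Fintype β] [DecidableEq β]
    (G : SimpleGraph α) (H : SimpleGraph β) [DecidableRel G.Adj] [DecidableRel H.Adj]
    (ℓG : α → ℕ) (ℓH : β → ℕ) :
    ∀ (t : ℕ) (v : β), wl (G ⊕g H) (Sum.elim ℓG ℓH) t (Sum.inr v) = wl H ℓH t v
  | 0, v => rfl
  | t + 1, v => by
    simp only [wl, neighborFinset_sum_inr, Finset.map_val, Multiset.map_map]
    refine Prod.ext (wl_sum_inr G H ℓG ℓH t v) ?_
    show Multiset.map _ _ = Multiset.map _ _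
    refine (congrArg (fun s : Finset (α ⊕ β) => Multiset.map (wl (G ⊕g H) (Sum.elim ℓG ℓH) t) s.val)
      (?_ : _ = (H.neighborFinset v).map ⟨Sum.inr, Sum.inr_injective⟩)).trans ?_
    · convert neighborFinset_sum_inr G H v
    simp only [Finset.map_val, Multiset.map_map]
    exact Multiset.map_congr rfl fun u _ => wl_sum_inr G H ℓG ℓH t u

section Stability
variable {U : Type} [Fintype U] [DecidableEq U] (K : SimpleGraph U) [DecidableRel K.Adj]
  (ℓ : U → ℕ)

/-- Stability at step t : the t-coloring determines the (t+1)-coloring. -/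
def Stab (t : ℕ) : Prop :=
  ∀ u v : U, wl K ℓ t u = wl K ℓ t v → wl K ℓ (t + 1) u = wl K ℓ (t + 1) v

/-- a lift of the t-th coloring to the (t+1)-st, valid under stability -/
noncomputable def wlLift (t : ℕ) : WLColor ℕ t → WLColor ℕ (t + 1) := fun c =>
  if h : ∃ u, wl K ℓ t u = c then wl K ℓ (t + 1) h.choose else default

lemma wlLift_eq {t : ℕ} (h : Stab K ℓ t) (u : U) :
    wlLift K ℓ t (wl K ℓ t u) = wl K ℓ (t + 1) u := by
  have hex : ∃ w, wl K ℓ t w = wl K ℓ t u := ⟨u, rfl⟩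
  rw [wlLift, dif_pos hex]
  exact h _ _ hex.choose_spec

lemma stab_succ {t : ℕ} (h : Stab K ℓ t) : Stab K ℓ (t + 1) := by
  intro u v huv
  have h2 : Multiset.map (wl K ℓ t) (K.neighborFinset u).val
      = Multiset.map (wl K ℓ t) (K.neighborFinset v).val := congrArg Prod.snd huv
  show (wl K ℓ (t+1) u, Multiset.map (wl K ℓ (t+1)) (K.neighborFinset u).val)
     = (wl K ℓ (t+1) v, Multiset.map (wl K ℓ (t+1)) (K.neighborFinset v).val)
  refine Prod.ext huv ?_
  have hfun : wl K ℓ (t + 1) = wlLift K ℓ t ∘ wl K ℓ t :=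
    funext fun w => (wlLift_eq K ℓ h w).symm
  rw [hfun, ← Multiset.map_map, ← Multiset.map_map, h2]

lemma stab_mono {t s : ℕ} (h : Stab K ℓ t) (hts : t ≤ s) : Stab K ℓ s := by
  induction s with
  | zero => simpa [Nat.le_zero.mp hts] using h
  | succ n ih =>
    rcases Nat.lt_or_ge t (n+1) with h' | h'
    · exact stab_succ K ℓ (ih (Nat.lt_succ_iff.mp h'))
    · have : t = n + 1 := le_antisymm hts h'
      subst this; exact h

lemma stab_later {t : ℕ} (h : Stab K ℓ t) :
    ∀ (s : ℕ) (u v : U), wl K ℓ t u = wl K ℓ t v → wl K ℓ (t + s) u = wl K ℓ (t + s) v := by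
  intro s
  induction s with
  | zero => intro u v huv; exact huv
  | succ n ih =>
    intro u v huv
    exact stab_mono K ℓ h (Nat.le_add_right t n) u v (ih u v huv)

/-- Number of colors at step t. -/
def numCol (t : ℕ) : ℕ := ((Finset.univ : Finset U).image (wl K ℓ t)).card

lemma image_eq_image_fst (t : ℕ) :
    (Finset.univ : Finset U).image (wl K ℓ t)
      = ((Finset.univ : Finset U).image (wl K ℓ (t + 1))).image Prod.fst := by
  exact (Finset.image_image (f := wl K ℓ (t+1)) (g := (Prod.fst : WLColor ℕ t × Multiset (WLColor ℕ t) → WLColor ℕ t)) (s := Finset.univ)).symm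

lemma numCol_mono (t : ℕ) : numCol K ℓ t ≤ numCol K ℓ (t + 1) := by
  rw [numCol, image_eq_image_fst]
  exact Finset.card_image_le

lemma stab_of_numCol_eq {t : ℕ} (h : numCol K ℓ (t + 1) ≤ numCol K ℓ t) : Stab K ℓ t := by
  intro u v huv
  have hcard : (((Finset.univ : Finset U).image (wl K ℓ (t + 1))).image Prod.fst).card
      = ((Finset.univ : Finset U).image (wl K ℓ (t + 1))).card := by
    refine le_antisymm Finset.card_image_le ?_
    calc ((Finset.univ : Finset U).image (wl K ℓ (t+1))).card = numCol K ℓ (t+1) := rfl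
      _ ≤ numCol K ℓ t := h
      _ = _ := by rw [numCol, image_eq_image_fst]
  have hinj := Finset.injOn_of_card_image_eq hcard
  have h1 : (wl K ℓ (t+1) u).1 = (wl K ℓ (t+1) v).1 := huv
  exact hinj (Finset.mem_image_of_mem _ (Finset.mem_univ u))
    (Finset.mem_image_of_mem _ (Finset.mem_univ v)) h1

lemma numCol_lower (m : ℕ) (hm : ∀ t < m, ¬ Stab K ℓ t) :
    m + numCol K ℓ 0 ≤ numCol K ℓ m := by
  induction m with
  | zero => simp
  | succ n ih =>
    have h1 : n + numCol K ℓ 0 ≤ numCol K ℓ n := ih (fun t ht => hm t (ht.trans n.lt_succ_self))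
    have h2 : numCol K ℓ n < numCol K ℓ (n + 1) := by
      rcases lt_or_ge (numCol K ℓ n) (numCol K ℓ (n+1)) with h | h
      · exact h
      · exact absurd (stab_of_numCol_eq K ℓ h) (hm n n.lt_succ_self)
    omega

lemma stab_card {N : ℕ} (hN : Fintype.card U ≤ N) : Stab K ℓ N := by
  by_cases hU : Nonempty U
  · by_contra hstab
    have hall : ∀ t < N + 1, ¬ Stab K ℓ t := by
      intro t ht hst
      exact hstab (stab_mono K ℓ hst (Nat.lt_succ_iff.mp ht))
    have h1 := numCol_lower K ℓ (N + 1) hall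
    have h2 : 1 ≤ numCol K ℓ 0 := by
      rcases hU with ⟨u⟩
      have : wl K ℓ 0 u ∈ (Finset.univ : Finset U).image (wl K ℓ 0) :=
        Finset.mem_image_of_mem _ (Finset.mem_univ u)
      exact Finset.card_pos.mpr ⟨_, this⟩
    have h3 : numCol K ℓ (N + 1) ≤ Fintype.card U :=
      (Finset.card_image_le).trans (le_of_eq Finset.card_univ)
    omega
  · intro u; exact absurd ⟨u⟩ hU

end Stability

/-- The constant coloring on a `d`-regular graph with constant labels `l0`. -/
def constCol (l0 d : ℕ) : (t : ℕ) → WLColor ℕ t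
  | 0 => l0
  | t + 1 => (constCol l0 d t, Multiset.replicate d (constCol l0 d t))

lemma wl_const {A : Type} [Fintype A] [DecidableEq A] (G'' : SimpleGraph A)
    [DecidableRel G''.Adj] (ℓ'' : A → ℕ) (l0 d : ℕ)
    (hl : ∀ a, ℓ'' a = l0) (hd : ∀ a, (G''.neighborFinset a).card = d) :
    ∀ (t : ℕ) (a : A), wl G'' ℓ'' t a = constCol l0 d t
  | 0, a => hl a
  | t + 1, a => by
    show (wl G'' ℓ'' t a, (G''.neighborFinset a).val.map (wl G'' ℓ'' t)) = _
    rw [constCol]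
    refine Prod.ext (wl_const _ _ _ _ hl hd t a) ?_
    calc (G''.neighborFinset a).val.map (wl G'' ℓ'' t)
        = (G''.neighborFinset a).val.map (fun _ => constCol l0 d t) :=
          Multiset.map_congr rfl (fun b _ => wl_const _ _ _ _ hl hd t b)
      _ = Multiset.replicate ((G''.neighborFinset a).val.card) (constCol l0 d t) :=
          Multiset.map_const' _ _
      _ = _ := by rw [show (G''.neighborFinset a).val.card = d from hd a]

lemma count_map_finset {V C : Type} [DecidableEq C] (s : Finset V) (f : V → C) (kc : C) :
    Multiset.count kc (s.val.map f) = (s.filter (fun v => f v = kc)).card := by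
  rw [Multiset.count_map]
  show _ = Multiset.card (Multiset.filter (fun v => f v = kc) s.val)
  congr 1
  exact Multiset.filter_congr (fun x _ => by constructor <;> (intro h; exact h.symm))

lemma card_subtype_count {V C : Type} [Fintype V] [DecidableEq V] [DecidableEq C]
    (f : V → C) (kc : C) [DecidablePred fun v => f v = kc] :
    Fintype.card {v : V // f v = kc} = Multiset.count kc (Finset.univ.val.map f) := by
  rw [count_map_finset, Fintype.card_subtype]
  congr!

lemma comap_degree {V : Type} [Fintype V] [DecidableEq V] (G : SimpleGraph V)
    [DecidableRel G.Adj] (P : V → Prop) [DecidablePred P] (a : {v : V // P v}) :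
    ((G.comap (Subtype.val : {v : V // P v} → V)).neighborFinset a).card
      = ((G.neighborFinset a.1).filter (fun u => P u)).card := by
  refine Finset.card_bij (fun b _ => b.1) ?_ ?_ ?_
  · intro b hb
    rw [SimpleGraph.mem_neighborFinset] at hb
    rw [Finset.mem_filter, SimpleGraph.mem_neighborFinset]
    exact ⟨hb, b.2⟩
  · intro b1 _ b2 _ h; exact Subtype.ext h
  · intro u hu
    rw [Finset.mem_filter, SimpleGraph.mem_neighborFinset] at hu
    exact ⟨⟨u, hu.2⟩, by rw [SimpleGraph.mem_neighborFinset]; exact hu.1, rfl⟩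

/-- If `G` and `H` have the same stable 1-WL coloring (the multisets of
stable colors coincide), then for any color `kc` the subgraphs induced by the vertices
of stable color `kc` are again 1-WL indistinguishable. -/
theorem color_induced_subgraphs_wl_indistinguishable
    {V W : Type} [Fintype V] [DecidableEq V] [Fintype W] [DecidableEq W]
    (G : SimpleGraph V) (H : SimpleGraph W) [DecidableRel G.Adj] [DecidableRel H.Adj]
    (ℓG : V → ℕ) (ℓH : W → ℕ)
    (N : ℕ) (hN : N = Fintype.card V + Fintype.card W)
    (hsame : Finset.univ.val.map (wl G ℓG N) = Finset.univ.val.map (wl H ℓH N))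
    (kc : WLColor ℕ N) :
    Finset.univ.val.map
        (wl (G.comap (Subtype.val : {v : V // wl G ℓG N v = kc} → V)) (fun v => ℓG v.1) N)
      = Finset.univ.val.map
        (wl (H.comap (Subtype.val : {w : W // wl H ℓH N w = kc} → W)) (fun w => ℓH w.1) N) := by
  classical
  have hcount : Multiset.count kc (Finset.univ.val.map (wl G ℓG N))
      = Multiset.count kc (Finset.univ.val.map (wl H ℓH N)) := by rw [hsame]
  have hcards : Fintype.card {v : V // wl G ℓG N v = kc}
      = Fintype.card {w : W // wl H ℓH N w = kc} := by
    rw [card_subtype_count, card_subtype_count, hcount]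
  by_cases hne : Nonempty {v : V // wl G ℓG N v = kc}
  · obtain ⟨v0⟩ := hne
    have hkcH : kc ∈ Finset.univ.val.map (wl H ℓH N) := by
      rw [← hsame]
      exact Multiset.mem_map.mpr ⟨v0.1, Finset.mem_univ_val _, v0.2⟩
    obtain ⟨w0, _, hw0⟩ := Multiset.mem_map.mp hkcH
    set l0 := wlProj0 N kc with hl0
    set K := G ⊕g H with hK
    set ℓS := (Sum.elim ℓG ℓH : V ⊕ W → ℕ) with hℓS
    have hstab : Stab K ℓS N :=
      stab_card K ℓS (le_of_eq (by rw [Fintype.card_sum, hN]))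
    set d := Multiset.count kc ((G.neighborFinset v0.1).val.map (wl G ℓG N)) with hd
    -- labels are constant on the color class
    have hlG : ∀ a : {v : V // wl G ℓG N v = kc}, ℓG a.1 = l0 := fun a => by
      rw [hl0, ← wlProj0_wl G ℓG N a.1, a.2]
    have hlH : ∀ a : {w : W // wl H ℓH N w = kc}, ℓH a.1 = l0 := fun a => by
      rw [hl0, ← wlProj0_wl H ℓH N a.1, a.2]
    -- degrees in the induced subgraph are constant
    have hdG : ∀ a : {v : V // wl G ℓG N v = kc},
        Multiset.count kc ((G.neighborFinset a.1).val.map (wl G ℓG N)) = d := fun a => by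
      have h1 : wl K ℓS N (Sum.inl a.1) = wl K ℓS N (Sum.inl v0.1) := by
        rw [wl_sum_inl, wl_sum_inl, a.2, v0.2]
      have h2 := hstab _ _ h1
      rw [wl_sum_inl, wl_sum_inl] at h2
      have h3 : (G.neighborFinset a.1).val.map (wl G ℓG N)
          = (G.neighborFinset v0.1).val.map (wl G ℓG N) := congrArg Prod.snd h2
      rw [h3]
    have hdH : ∀ a : {w : W // wl H ℓH N w = kc},
        Multiset.count kc ((H.neighborFinset a.1).val.map (wl H ℓH N)) = d := fun a => by
      have h1 : wl K ℓS N (Sum.inr a.1) = wl K ℓS N (Sum.inl v0.1) := by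
        rw [wl_sum_inr, wl_sum_inl, a.2, v0.2]
      have h2 := hstab _ _ h1
      rw [wl_sum_inr, wl_sum_inl] at h2
      have h3 : (H.neighborFinset a.1).val.map (wl H ℓH N)
          = (G.neighborFinset v0.1).val.map (wl G ℓG N) := congrArg Prod.snd h2
      rw [h3]
    have hdegG : ∀ a : {v : V // wl G ℓG N v = kc},
        ((G.comap (Subtype.val : {v : V // wl G ℓG N v = kc} → V)).neighborFinset a).card
          = d := fun a => by
      rw [comap_degree, ← hdG a, count_map_finset]
    have hdegH : ∀ a : {w : W // wl H ℓH N w = kc},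
        ((H.comap (Subtype.val : {w : W // wl H ℓH N w = kc} → W)).neighborFinset a).card
          = d := fun a => by
      rw [comap_degree, ← hdH a, count_map_finset]
    have hcG := wl_const (G.comap Subtype.val) (fun v => ℓG v.1) l0 d hlG hdegG N
    have hcH := wl_const (H.comap Subtype.val) (fun w => ℓH w.1) l0 d hlH hdegH N
    calc Finset.univ.val.map
          (wl (G.comap (Subtype.val : {v : V // wl G ℓG N v = kc} → V)) (fun v => ℓG v.1) N)
        = Finset.univ.val.map (fun _ => constCol l0 d N) :=
          Multiset.map_congr rfl (fun a _ => hcG a)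
      _ = Multiset.replicate (Fintype.card {v : V // wl G ℓG N v = kc}) (constCol l0 d N) := by
          rw [Multiset.map_const']; congr 1
      _ = Multiset.replicate (Fintype.card {w : W // wl H ℓH N w = kc}) (constCol l0 d N) := by
          rw [hcards]
      _ = Finset.univ.val.map (fun _ => constCol l0 d N) := by
          rw [Multiset.map_const']; congr 1
      _ = _ := (Multiset.map_congr rfl (fun a _ => hcH a)).symm
  · haveI h1 : IsEmpty {v : V // wl G ℓG N v = kc} := not_nonempty_iff.mp hne
    haveI h2 : IsEmpty {w : W // wl H ℓH N w = kc} := by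
      rw [← Fintype.card_eq_zero_iff] at h1 ⊢
      rw [← hcards]; exact h1
    rw [Finset.univ_eq_empty, Finset.univ_eq_empty]
    rfl
end

section
/- Two vertices u and v of (possibly different) graphs receive the same color at iteration t of 1-WL color refinement if and only if their depth-t unrolling trees (the trees obtained by recursively unrolling neighborhoods to depth t) are isomorphic as rooted labeled trees. -/
/-- Rooted trees with labels in `L` (children come as a list). -/
inductive RTree (L : Type) : Type
  | node : L → List (RTree L) → RTree L

/-- Isomorphism of rooted labeled trees: the root labels agree and the children lists
match up recursively, up to a permutation. -/
inductive RTreeIso {L : Type} : RTree L → RTree L → Prop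
  | node (l : L) (c₁ c₂ c₂' : List (RTree L)) (hperm : c₂.Perm c₂')
      (h : List.Forall₂ RTreeIso c₁ c₂') :
      RTreeIso (RTree.node l c₁) (RTree.node l c₂)

/-- The depth-`t` unrolling tree of a vertex `v`: the root carries the label of `v`,
and its children are the depth-`(t-1)` unrolling trees of the neighbours of `v`. -/
noncomputable def unroll {V L : Type} [Fintype V] [DecidableEq V] (G : SimpleGraph V) [DecidableRel G.Adj]
    (ℓ : V → L) : (t : ℕ) → V → RTree L
  | 0 => fun v => RTree.node (ℓ v) []
  | t + 1 => fun v => RTree.node (ℓ v) ((G.neighborFinset v).toList.map (unroll G ℓ t))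

/-- Convert `Multiset.Rel` on coerced lists to perm + Forall₂. -/
theorem rel_coe_iff {α β : Type*} {r : α → β → Prop} :
    ∀ (l₁ : List α) (l₂ : List β), Multiset.Rel r ↑l₁ ↑l₂ ↔
      ∃ l₂', l₂.Perm l₂' ∧ List.Forall₂ r l₁ l₂' := by
  intro l₁
  induction l₁ with
  | nil =>
    intro l₂
    constructor
    · intro h
      rw [Multiset.coe_nil, Multiset.rel_zero_left, Multiset.coe_eq_zero] at h
      exact ⟨[], by simp [h], List.Forall₂.nil⟩
    · rintro ⟨l₂', hperm, hf⟩
      cases hf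
      rw [(Multiset.coe_eq_coe.mpr hperm : (↑l₂ : Multiset β) = ↑([] : List β))]
      simp [Multiset.rel_zero_left]
  | cons a l₁ ih =>
    intro l₂
    constructor
    · intro h
      rw [show ((a :: l₁ : List α) : Multiset α) = a ::ₘ ↑l₁ from rfl,
        Multiset.rel_cons_left] at h
      obtain ⟨b, bs, hab, hrel, hl₂⟩ := h
      rw [← Multiset.coe_toList bs] at hrel
      obtain ⟨l₂', hperm, hf⟩ := (ih bs.toList).mp hrel
      refine ⟨b :: l₂', ?_, List.Forall₂.cons hab hf⟩
      have : (↑l₂ : Multiset β) = ↑(b :: bs.toList) := by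
        rw [hl₂, ← Multiset.cons_coe, Multiset.coe_toList]
      exact (Multiset.coe_eq_coe.mp this).trans (hperm.cons b)
    · rintro ⟨l₂', hperm, hf⟩
      rw [Multiset.coe_eq_coe.mpr hperm]
      cases hf with
      | cons hab hf =>
        exact Multiset.rel_cons_left.mpr ⟨_, _, hab, (ih _).mpr ⟨_, List.Perm.refl _, hf⟩, rfl⟩

/-- Destructor for `RTreeIso`. -/
theorem RTreeIso.destruct {L : Type} {x y : RTree L} (h : RTreeIso x y) :
    ∃ l c₁ c₂ c₂', x = RTree.node l c₁ ∧ y = RTree.node l c₂ ∧ c₂.Perm c₂' ∧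
      List.Forall₂ RTreeIso c₁ c₂' := by
  cases h with
  | node l c₁ c₂ c₂' hperm hf => exact ⟨l, c₁, c₂, c₂', rfl, rfl, hperm, hf⟩

/-- The initial label is determined by the WL color. -/
theorem wl_label {V W L : Type} [Fintype V] [DecidableEq V] [Fintype W] [DecidableEq W]
    (G : SimpleGraph V) (H : SimpleGraph W) [DecidableRel G.Adj] [DecidableRel H.Adj]
    (ℓG : V → L) (ℓH : W → L) :
    ∀ (t : ℕ) (u : V) (v : W), wl G ℓG t u = wl H ℓH t v → ℓG u = ℓH v := by
  intro t
  induction t with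
  | zero => intro u v h; exact h
  | succ t ih =>
    intro u v h
    exact ih u v (congrArg Prod.fst h)

/-- Going down one level in matched neighbour color multisets. -/
theorem map_down {V W L : Type} [Fintype V] [DecidableEq V] [Fintype W] [DecidableEq W]
    (G : SimpleGraph V) (H : SimpleGraph W) [DecidableRel G.Adj] [DecidableRel H.Adj]
    (ℓG : V → L) (ℓH : W → L) (t : ℕ) (s : Multiset V) (s' : Multiset W)
    (h : s.map (wl G ℓG (t + 1)) = s'.map (wl H ℓH (t + 1))) :
    s.map (wl G ℓG t) = s'.map (wl H ℓH t) := by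
  have := congrArg (Multiset.map (Prod.fst : WLColor L t × Multiset (WLColor L t) → WLColor L t)) h
  have e1 := Multiset.map_map (Prod.fst : WLColor L t × Multiset (WLColor L t) → WLColor L t) (wl G ℓG (t + 1)) s
  have e2 := Multiset.map_map (Prod.fst : WLColor L t × Multiset (WLColor L t) → WLColor L t) (wl H ℓH (t + 1)) s'
  exact e1.symm.trans (this.trans e2)

/-- Label equality together with equality of neighbour color multisets forces equal WL
colors one level up. -/
theorem wl_step {V W L : Type} [Fintype V] [DecidableEq V] [Fintype W] [DecidableEq W]
    (G : SimpleGraph V) (H : SimpleGraph W) [DecidableRel G.Adj] [DecidableRel H.Adj]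
    (ℓG : V → L) (ℓH : W → L) :
    ∀ (t : ℕ) (u : V) (v : W), ℓG u = ℓH v →
      (G.neighborFinset u).val.map (wl G ℓG t) = (H.neighborFinset v).val.map (wl H ℓH t) →
      wl G ℓG (t + 1) u = wl H ℓH (t + 1) v := by
  intro t
  induction t with
  | zero =>
    intro u v hl hm
    exact Prod.ext hl hm
  | succ t ih =>
    intro u v hl hm
    exact Prod.ext (ih u v hl (map_down G H ℓG ℓH t _ _ hm)) hm

/-- Two vertices `u`, `v` of (possibly different) graphs receive the
same color at iteration `t` of 1-WL iff their depth-`t` unrolling trees are isomorphic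
as rooted labeled trees. -/
theorem wl_eq_iff_unroll_iso
    {V W L : Type} [Fintype V] [DecidableEq V] [Fintype W] [DecidableEq W]
    (G : SimpleGraph V) (H : SimpleGraph W) [DecidableRel G.Adj] [DecidableRel H.Adj]
    (ℓG : V → L) (ℓH : W → L) (t : ℕ) (u : V) (v : W) :
    wl G ℓG t u = wl H ℓH t v ↔ RTreeIso (unroll G ℓG t u) (unroll H ℓH t v) := by
  induction t generalizing u v with
  | zero =>
    constructor
    · intro h
      show RTreeIso (RTree.node (ℓG u) []) (RTree.node (ℓH v) [])
      rw [show ℓG u = ℓH v from h]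
      exact RTreeIso.node _ [] [] [] (List.Perm.refl _) List.Forall₂.nil
    · intro h
      obtain ⟨l, c₁, c₂, c₂', hx, hy, -, -⟩ := h.destruct
      injection hx with h1 _
      injection hy with h2 _
      show ℓG u = ℓH v
      rw [h1, h2]
  | succ t ih =>
    constructor
    · intro h
      have hl : ℓG u = ℓH v := wl_label G H ℓG ℓH (t + 1) u v h
      have hm : (G.neighborFinset u).val.map (wl G ℓG t)
          = (H.neighborFinset v).val.map (wl H ℓH t) := congrArg Prod.snd h
      have hrel : Multiset.Rel (fun a b => wl G ℓG t a = wl H ℓH t b)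
          (G.neighborFinset u).val (H.neighborFinset v).val :=
        Multiset.rel_map.mp (Multiset.rel_eq.mpr hm)
      have hrel2 : Multiset.Rel RTreeIso
          ((G.neighborFinset u).val.map (unroll G ℓG t))
          ((H.neighborFinset v).val.map (unroll H ℓH t)) :=
        Multiset.rel_map.mpr (hrel.mono (fun a _ b _ hab => (ih a b).mp hab))
      rw [← Multiset.coe_toList (G.neighborFinset u).val,
        ← Multiset.coe_toList (H.neighborFinset v).val, Multiset.map_coe,
        Multiset.map_coe] at hrel2
      obtain ⟨c₂', hperm, hf⟩ := (rel_coe_iff _ _).mp hrel2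
      show RTreeIso (RTree.node (ℓG u) _) (RTree.node (ℓH v) _)
      rw [hl]
      exact RTreeIso.node _ _ _ c₂' hperm hf
    · intro h
      obtain ⟨l, c₁, c₂, c₂', hx, hy, hperm, hf⟩ := h.destruct
      injection hx with h1 hc₁
      injection hy with h2 hc₂
      have hl : ℓG u = ℓH v := by rw [h1, h2]
      subst hc₁ hc₂
      have hrel2 := (rel_coe_iff (r := RTreeIso)
          ((G.neighborFinset u).toList.map (unroll G ℓG t))
          ((H.neighborFinset v).toList.map (unroll H ℓH t))).mpr ⟨c₂', hperm, hf⟩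
      rw [← Multiset.map_coe, ← Multiset.map_coe, Finset.coe_toList,
        Finset.coe_toList] at hrel2
      have hrel : Multiset.Rel (fun a b => wl G ℓG t a = wl H ℓH t b)
          (G.neighborFinset u).val (H.neighborFinset v).val :=
        (Multiset.rel_map.mp hrel2).mono (fun a _ b _ hab => (ih a b).mpr hab)
      exact wl_step G H ℓG ℓH t u v hl
        (Multiset.rel_eq.mp (Multiset.rel_map.mpr hrel))
end

section
/- Let G and H be graphs having the same stable 1-WL coloring. Add a finite set of virtual nodes to each graph and connect virtual nodes to original nodes so that the assignment depends only on the stable 1-WL color of the original node (two equally colored vertices are connected to the same set of virtual nodes, consistently across both graphs). Then the augmented graphs Ĝ and Ĥ have the same stable 1-WL color partition. -/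
/-- The graph `G` augmented with a set `M` of virtual nodes: each original node `v` is
additionally connected to the virtual nodes in `a v`; there are no edges among virtual
nodes. -/
def augGraph {V M : Type} (G : SimpleGraph V) (a : V → Finset M) : SimpleGraph (V ⊕ M) where
  Adj x y :=
    match x, y with
    | .inl u, .inl v => G.Adj u v
    | .inl u, .inr c => c ∈ a u
    | .inr c, .inl u => c ∈ a u
    | .inr _, .inr _ => False
  symm := by
    constructor
    rintro (u | c) (v | d) h
    · exact G.adj_symm h
    · exact h
    · exact h
    · exact h.elim
  loopless := by
    constructor
    rintro (u | c) h
    · exact G.irrefl h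
    · exact h

instance {V M : Type} (G : SimpleGraph V) [DecidableRel G.Adj] (a : V → Finset M)
    [DecidableEq M] : DecidableRel (augGraph G a).Adj := fun x y =>
  match x, y with
  | .inl u, .inl v => inferInstanceAs (Decidable (G.Adj u v))
  | .inl u, .inr c => inferInstanceAs (Decidable (c ∈ a u))
  | .inr c, .inl u => inferInstanceAs (Decidable (c ∈ a u))
  | .inr _, .inr _ => inferInstanceAs (Decidable False)

namespace AugAux

def wlRoot {L : Type} : (t : ℕ) → WLColor L t → L
  | 0, c => c
  | t + 1, c => wlRoot t c.1

lemma wlRoot_wl {V L : Type} [Fintype V] [DecidableEq V] (G : SimpleGraph V)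
    [DecidableRel G.Adj] (ℓ : V → L) :
    ∀ (t : ℕ) (v : V), wlRoot t (wl G ℓ t v) = ℓ v
  | 0, _ => rfl
  | t + 1, v => wlRoot_wl G ℓ t v

def fgPair {L M : Type} [DecidableEq L] [DecidableEq M] {N : ℕ}
    (A : WLColor L N → Finset M) (nbc : WLColor L N → Multiset (WLColor L N))
    (S : Multiset (WLColor L N)) :
    (t : ℕ) → (WLColor L N → WLColor (Option L) t) × (M → WLColor (Option L) t)
  | 0 => (fun c => some (wlRoot N c), fun _ => none)
  | t + 1 =>
      let p := fgPair A nbc S t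
      (fun c => (p.1 c, (nbc c).map p.1 + (A c).val.map p.2),
       fun m => (p.2 m, (S.filter (fun c => m ∈ A c)).map p.1))

lemma aug_adj_inl_inl {V M : Type} (G : SimpleGraph V) (a : V → Finset M) (v u : V) :
    (augGraph G a).Adj (Sum.inl v) (Sum.inl u) ↔ G.Adj v u := Iff.rfl

lemma aug_adj_inl_inr {V M : Type} (G : SimpleGraph V) (a : V → Finset M) (v : V) (m : M) :
    (augGraph G a).Adj (Sum.inl v) (Sum.inr m) ↔ m ∈ a v := Iff.rfl

lemma aug_adj_inr_inl {V M : Type} (G : SimpleGraph V) (a : V → Finset M) (m : M) (v : V) :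
    (augGraph G a).Adj (Sum.inr m) (Sum.inl v) ↔ m ∈ a v := Iff.rfl

lemma aug_adj_inr_inr {V M : Type} (G : SimpleGraph V) (a : V → Finset M) (m m' : M) :
    (augGraph G a).Adj (Sum.inr m) (Sum.inr m') ↔ False := Iff.rfl

lemma aug_nf_inl {V M : Type} [Fintype V] [DecidableEq V] [Fintype M] [DecidableEq M]
    (G : SimpleGraph V) [DecidableRel G.Adj] (a : V → Finset M) (v : V) :
    ((augGraph G a).neighborFinset (Sum.inl v)).val
      = (G.neighborFinset v).val.map Sum.inl + (a v).val.map Sum.inr := by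
  have h : (augGraph G a).neighborFinset (Sum.inl v) = (G.neighborFinset v).disjSum (a v) := by
    ext x
    cases x with
    | inl u => simp [SimpleGraph.mem_neighborFinset, aug_adj_inl_inl]
    | inr m => simp [SimpleGraph.mem_neighborFinset, aug_adj_inl_inr]
  rw [h]
  rfl

lemma aug_nf_inr {V M : Type} [Fintype V] [DecidableEq V] [Fintype M] [DecidableEq M]
    (G : SimpleGraph V) [DecidableRel G.Adj] (a : V → Finset M) (m : M) :
    ((augGraph G a).neighborFinset (Sum.inr m)).val
      = (Finset.univ.filter (fun v => m ∈ a v)).val.map Sum.inl := by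
  have h : (augGraph G a).neighborFinset (Sum.inr m)
      = (Finset.univ.filter (fun v => m ∈ a v)).map ⟨Sum.inl, Sum.inl_injective⟩ := by
    ext x
    cases x with
    | inl u => simp [SimpleGraph.mem_neighborFinset, aug_adj_inr_inl]
    | inr m' => simp [SimpleGraph.mem_neighborFinset, aug_adj_inr_inr]
  rw [h]
  rfl



lemma wl_aug_eq {V M L : Type} [Fintype V] [DecidableEq V] [Fintype M] [DecidableEq M]
    [DecidableEq L]
    (G : SimpleGraph V) [DecidableRel G.Adj] (ℓ : V → L) (N : ℕ)
    (A : WLColor L N → Finset M) (nbc : WLColor L N → Multiset (WLColor L N))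
    (S : Multiset (WLColor L N))
    (hnbc : ∀ v, nbc (wl G ℓ N v) = (G.neighborFinset v).val.map (wl G ℓ N))
    (hS : S = Finset.univ.val.map (wl G ℓ N)) :
    ∀ t : ℕ,
      (∀ v, wl (augGraph G (fun v => A (wl G ℓ N v)))
            (Sum.elim (fun v => some (ℓ v)) (fun _ => (none : Option L))) t (Sum.inl v)
          = (fgPair A nbc S t).1 (wl G ℓ N v))
      ∧ (∀ m, wl (augGraph G (fun v => A (wl G ℓ N v)))
            (Sum.elim (fun v => some (ℓ v)) (fun _ => (none : Option L))) t (Sum.inr m)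
          = (fgPair A nbc S t).2 m) := by
  set a : V → Finset M := fun v => A (wl G ℓ N v) with ha
  set ℓ' : V ⊕ M → Option L := Sum.elim (fun v => some (ℓ v)) (fun _ => (none : Option L))
    with hℓ'
  intro t
  induction t with
  | zero =>
    constructor
    · intro v
      show ℓ' (Sum.inl v) = some (wlRoot N (wl G ℓ N v))
      rw [wlRoot_wl]
      rfl
    · intro m
      rfl
  | succ t ih =>
    obtain ⟨ih1, ih2⟩ := ih
    constructor
    · intro v
      show (wl (augGraph G a) ℓ' t (Sum.inl v),
          ((augGraph G a).neighborFinset (Sum.inl v)).val.map (wl (augGraph G a) ℓ' t))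
        = ((fgPair A nbc S t).1 (wl G ℓ N v),
            (nbc (wl G ℓ N v)).map (fgPair A nbc S t).1
              + (a v).val.map (fgPair A nbc S t).2)
      rw [aug_nf_inl, Multiset.map_add, Multiset.map_map, Multiset.map_map, ih1 v, hnbc,
        ← Multiset.map_map]
      congr 1
      congr 1
      · rw [Multiset.map_map, Multiset.map_map]
        exact Multiset.map_congr rfl fun u _ => ih1 u
      · exact Multiset.map_congr rfl fun m _ => ih2 m
    · intro m
      show (wl (augGraph G a) ℓ' t (Sum.inr m),
          ((augGraph G a).neighborFinset (Sum.inr m)).val.map (wl (augGraph G a) ℓ' t))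
        = ((fgPair A nbc S t).2 m,
            (S.filter (fun c => m ∈ A c)).map (fgPair A nbc S t).1)
      rw [aug_nf_inr, Multiset.map_map, ih2 m]
      congr 1
      have h1 : (Finset.univ.filter (fun v => m ∈ a v)).val.map (wl G ℓ N)
          = S.filter (fun c => m ∈ A c) := by
        rw [hS, Multiset.filter_map, Finset.filter_val]
        rfl
      rw [← h1, ← Multiset.map_map, Multiset.map_map, Multiset.map_map]
      exact Multiset.map_congr rfl fun u _ => ih1 u
end AugAux

namespace AugAux

lemma exists_common_nbc {V W L : Type} [Fintype V] [DecidableEq V] [Fintype W] [DecidableEq W]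
    [DecidableEq L]
    (G : SimpleGraph V) (H : SimpleGraph W) [DecidableRel G.Adj] [DecidableRel H.Adj]
    (ℓG : V → L) (ℓH : W → L) (N : ℕ) (hN : N = Fintype.card V + Fintype.card W) :
    ∃ nbc : WLColor L N → Multiset (WLColor L N),
      (∀ v, nbc (wl G ℓG N v) = (G.neighborFinset v).val.map (wl G ℓG N)) ∧
      (∀ w, nbc (wl H ℓH N w) = (H.neighborFinset w).val.map (wl H ℓH N)) := by
  classical
  set c : (t : ℕ) → V ⊕ W → WLColor L t := fun t => Sum.elim (wl G ℓG t) (wl H ℓH t) with hc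
  set nb : V ⊕ W → Multiset (V ⊕ W) :=
    Sum.elim (fun v => (G.neighborFinset v).val.map Sum.inl)
      (fun w => (H.neighborFinset w).val.map Sum.inr) with hnb
  have hrec : ∀ (t : ℕ) (x : V ⊕ W), c (t + 1) x = (c t x, (nb x).map (c t)) := by
    rintro t (v | w) <;>
      simp [hc, hnb, wl, Multiset.map_map, Function.comp] <;> rfl
  have hdetstep : ∀ t : ℕ, (∀ x y, c t x = c t y → c (t + 1) x = c (t + 1) y) →
      ∀ x y, c (t + 1) x = c (t + 1) y → c (t + 1 + 1) x = c (t + 1 + 1) y := by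
    intro t h x y hxy
    have hft : Function.FactorsThrough (c (t + 1)) (c t) := fun a b hab => h a b hab
    have hF : ∀ z, Function.extend (c t) (c (t + 1)) (fun _ => c (t + 1) x) (c t z)
        = c (t + 1) z := fun z => hft.extend_apply _ z
    have hmap : ∀ s : Multiset (V ⊕ W), s.map (c (t + 1)) =
        (s.map (c t)).map (Function.extend (c t) (c (t + 1)) (fun _ => c (t + 1) x)) := by
      intro s
      rw [Multiset.map_map]
      exact Multiset.map_congr rfl fun z _ => (hF z).symm
    have hxy' := hxy
    rw [hrec t x, hrec t y] at hxy'
    replace hxy' := Prod.mk.inj hxy'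
    rw [hrec (t + 1) x, hrec (t + 1) y]
    refine Prod.ext hxy ?_
    show Multiset.map (c (t + 1)) (nb x) = Multiset.map (c (t + 1)) (nb y)
    rw [hmap, hmap, hxy'.2]
  set n : ℕ → ℕ := fun t => (Finset.univ.image (c t)).card with hn
  have himg : ∀ t, (Finset.univ.image (c (t + 1))).image Prod.fst
      = Finset.univ.image (c t) := by
    intro t
    have hco : Prod.fst ∘ c (t + 1) = c t := funext fun x => by
      show (c (t + 1) x).1 = c t x
      rw [hrec]
    exact (Finset.image_image (s := Finset.univ) (f := c (t + 1)) (g := Prod.fst)).trans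
      (congrArg (fun f => Finset.image f Finset.univ) hco)
  have hmono : ∀ t, n t ≤ n (t + 1) := by
    intro t
    calc n t = ((Finset.univ.image (c (t + 1))).image Prod.fst).card := by rw [himg]
      _ ≤ n (t + 1) := Finset.card_image_le
  have hdet_of_eq : ∀ t, n t = n (t + 1) →
      ∀ x y, c t x = c t y → c (t + 1) x = c (t + 1) y := by
    intro t ht x y hxy
    have hinj := Finset.injOn_of_card_image_eq (f := Prod.fst)
      (s := Finset.univ.image (c (t + 1))) (by exact (congrArg Finset.card (himg t)).trans ht)
    have h1 : c (t + 1) x ∈ Finset.univ.image (c (t + 1)) :=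
      Finset.mem_image_of_mem _ (Finset.mem_univ x)
    have h2 : c (t + 1) y ∈ Finset.univ.image (c (t + 1)) :=
      Finset.mem_image_of_mem _ (Finset.mem_univ y)
    apply hinj (Finset.mem_coe.mpr h1) (Finset.mem_coe.mpr h2)
    show (c (t + 1) x).1 = (c (t + 1) y).1
    rw [hrec, hrec]
    exact hxy
  have hbound : ∀ t, n t ≤ N := by
    intro t
    calc n t ≤ (Finset.univ : Finset (V ⊕ W)).card := Finset.card_image_le
      _ = N := by rw [Finset.card_univ, Fintype.card_sum, hN]
  have hex : ∃ t ≤ N, n t = n (t + 1) := by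
    by_contra hcon
    push_neg at hcon
    have hstrict : ∀ t, t ≤ N → n t < n (t + 1) :=
      fun t ht => lt_of_le_of_ne (hmono t) (hcon t ht)
    have hgrow : ∀ t, t ≤ N + 1 → t ≤ n t := by
      intro t
      induction t with
      | zero => intro _; exact Nat.zero_le _
      | succ t iht =>
        intro h
        have h1 : t ≤ N := Nat.lt_succ_iff.mp h
        have h2 := hstrict t h1
        have h3 := iht (le_trans h1 (Nat.le_succ N))
        omega
    have h4 := hgrow (N + 1) le_rfl
    have h5 := hbound (N + 1)
    omega
  obtain ⟨t0, ht0, hn0⟩ := hex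
  have hchain : ∀ k, ∀ x y, c (t0 + k) x = c (t0 + k) y
      → c (t0 + k + 1) x = c (t0 + k + 1) y := by
    intro k
    induction k with
    | zero => exact hdet_of_eq t0 hn0
    | succ k ihk => exact hdetstep (t0 + k) ihk
  have hdetN : ∀ x y, c N x = c N y → c (N + 1) x = c (N + 1) y := by
    have h := hchain (N - t0)
    rwa [Nat.add_sub_cancel' ht0] at h
  have hft : Function.FactorsThrough (fun x => (nb x).map (c N)) (c N) := by
    intro x y hxy
    have h := hdetN x y hxy
    rw [hrec, hrec] at h
    exact (Prod.mk.inj h).2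
  refine ⟨Function.extend (c N) (fun x => (nb x).map (c N)) (fun _ => 0), ?_, ?_⟩
  · intro v
    have h := hft.extend_apply (fun _ => 0) (Sum.inl v)
    simpa [hc, hnb, Multiset.map_map, Function.comp] using h
  · intro w
    have h := hft.extend_apply (fun _ => 0) (Sum.inr w)
    simpa [hc, hnb, Multiset.map_map, Function.comp] using h

end AugAux


/-- Let `G` and `H` have the same stable 1-WL coloring (at iteration
`N = |V(G)| + |V(H)|`).  Augment both graphs with the same finite set `M` of virtual
nodes, connecting each original node `v` to the set `A c` of virtual nodes depending
only on its stable color `c`.  Virtual nodes get a fresh initial color (`none`), while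
original nodes keep their labels (`some (ℓ v)`).  Then the augmented graphs have the
same stable 1-WL coloring (at iteration `N' = (|V(G)|+|M|) + (|V(H)|+|M|)`). -/
theorem augmented_graphs_same_stable_coloring
    {V W M L : Type} [Fintype V] [DecidableEq V] [Fintype W] [DecidableEq W]
    [Fintype M] [DecidableEq M] [DecidableEq L]
    (G : SimpleGraph V) (H : SimpleGraph W) [DecidableRel G.Adj] [DecidableRel H.Adj]
    (ℓG : V → L) (ℓH : W → L)
    (N : ℕ) (hN : N = Fintype.card V + Fintype.card W)
    (hsame : Finset.univ.val.map (wl G ℓG N) = Finset.univ.val.map (wl H ℓH N))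
    (A : WLColor L N → Finset M)
    (N' : ℕ)
    (hN' : N' = (Fintype.card V + Fintype.card M) + (Fintype.card W + Fintype.card M)) :
    Finset.univ.val.map
        (wl (augGraph G (fun v => A (wl G ℓG N v)))
          (Sum.elim (fun v => some (ℓG v)) (fun _ => (none : Option L))) N')
      = Finset.univ.val.map
        (wl (augGraph H (fun w => A (wl H ℓH N w)))
          (Sum.elim (fun w => some (ℓH w)) (fun _ => (none : Option L))) N') := by
  classical
  obtain ⟨nbc, hnbcG, hnbcH⟩ := AugAux.exists_common_nbc G H ℓG ℓH N hN
  have hG := AugAux.wl_aug_eq G ℓG N A nbc (Finset.univ.val.map (wl G ℓG N)) hnbcG rfl N'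
  have hH := AugAux.wl_aug_eq H ℓH N A nbc (Finset.univ.val.map (wl G ℓG N)) hnbcH hsame N'
  have huVM : (Finset.univ : Finset (V ⊕ M)).val
      = (Finset.univ : Finset V).val.map Sum.inl + (Finset.univ : Finset M).val.map Sum.inr := by
    rw [← Finset.univ_disjSum_univ, Finset.val_disjSum]
    rfl
  have huWM : (Finset.univ : Finset (W ⊕ M)).val
      = (Finset.univ : Finset W).val.map Sum.inl + (Finset.univ : Finset M).val.map Sum.inr := by
    rw [← Finset.univ_disjSum_univ, Finset.val_disjSum]
    rfl
  have hGeq : Finset.univ.val.map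
        (wl (augGraph G (fun v => A (wl G ℓG N v)))
          (Sum.elim (fun v => some (ℓG v)) (fun _ => (none : Option L))) N')
      = ((Finset.univ : Finset V).val.map (wl G ℓG N)).map (AugAux.fgPair A nbc (Finset.univ.val.map (wl G ℓG N)) N').1
          + (Finset.univ : Finset M).val.map (AugAux.fgPair A nbc (Finset.univ.val.map (wl G ℓG N)) N').2 := by
    rw [huVM, Multiset.map_add]
    simp only [Multiset.map_map]
    congr 1
    · exact Multiset.map_congr rfl fun v _ => hG.1 v
    · exact Multiset.map_congr rfl fun m _ => hG.2 m
  have hHeq : Finset.univ.val.map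
        (wl (augGraph H (fun w => A (wl H ℓH N w)))
          (Sum.elim (fun w => some (ℓH w)) (fun _ => (none : Option L))) N')
      = ((Finset.univ : Finset W).val.map (wl H ℓH N)).map (AugAux.fgPair A nbc (Finset.univ.val.map (wl G ℓG N)) N').1
          + (Finset.univ : Finset M).val.map (AugAux.fgPair A nbc (Finset.univ.val.map (wl G ℓG N)) N').2 := by
    rw [huWM, Multiset.map_add]
    simp only [Multiset.map_map]
    congr 1
    · exact Multiset.map_congr rfl fun w _ => hH.1 w
    · exact Multiset.map_congr rfl fun m _ => hH.2 m
  rw [hGeq, hHeq, hsame]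
end
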